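/- The 3-VFCA rule f(x,y,z) = (x₁y₂ + x₁y₃ + y₁z₁, x₂y₂ + x₃y₂ + y₁z₂, x₂y₃ + x₃y₃ + y₁z₃) is complete number-conserving on periodic configurations in the simplex Δ of any period L. -/

import Mathlib

/-!
On the simplex the rule is a discrete continuity equation:
`f(x, y, z) = y + J(x, y) - J(y, z)` with the flux `J(a, b) = a₀ • (e₀ - b)`.
Summed over one period the fluxes telescope away, so every component is conserved.
-/

open Finset

theorem sum_range_sub_succ_eq_zero_of_periodic {M : Type*} [AddCommGroup M] {g : ℤ → M}
    {L : ℕ} (hg : Function.Periodic g L) :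
    ∑ i ∈ range L, (g i - g (i + 1)) = 0 := by
  have h := sum_range_sub' (fun n : ℕ => g n) L
  push_cast at h
  rw [h, ← zero_add (L : ℤ), hg, sub_self]

theorem sum_range_rule_eq_of_flux_form {α M : Type*} [AddCommGroup M] {S : Set α}
    (f : α → α → α → M) (φ : α → M) (J : α → α → M)
    (hf : ∀ a ∈ S, ∀ b ∈ S, ∀ c ∈ S, f a b c = φ b + J a b - J b c)
    {L : ℕ} {x : ℤ → α} (hper : Function.Periodic x L) (hS : ∀ i, x i ∈ S) :
    ∑ i ∈ range L, f (x ((i : ℤ) - 1)) (x i) (x ((i : ℤ) + 1)) =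
      ∑ i ∈ range L, φ (x i) := by
  set g : ℤ → M := fun i => J (x (i - 1)) (x i)
  have hg : Function.Periodic g L := fun i => by
    simp only [g, hper i, ← hper (i - 1), sub_add_eq_add_sub]
  have hflux : ∀ i : ℤ, f (x (i - 1)) (x i) (x (i + 1)) = φ (x i) + (g i - g (i + 1)) :=
    fun i => by
      rw [hf _ (hS _) _ (hS _) _ (hS _), add_sub_assoc]
      simp only [g, add_sub_cancel_right]
  simp only [hflux, sum_add_distrib, sum_range_sub_succ_eq_zero_of_periodic hg, add_zero]

def flux (a b : Fin 3 → ℝ) : Fin 3 → ℝ := a 0 • (Pi.single 0 1 - b)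

theorem rule_eq_add_flux_sub_flux (a b c : Fin 3 → ℝ)
    (ha : ∑ m, a m = 1) (hb : ∑ m, b m = 1) :
    ![a 0 * b 1 + a 0 * b 2 + b 0 * c 0,
      a 1 * b 1 + a 2 * b 1 + b 0 * c 1,
      a 1 * b 2 + a 2 * b 2 + b 0 * c 2] = b + flux a b - flux b c := by
  rw [Fin.sum_univ_three] at ha hb
  ext k
  fin_cases k <;>
    simp only [flux, Fin.isValue, Fin.reduceFinMk, Matrix.cons_val, Pi.add_apply, Pi.sub_apply,
      Pi.smul_apply, smul_eq_mul, Pi.single_apply, Fin.reduceEq, if_true, if_false]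
  · linear_combination a 0 * hb
  · linear_combination b 1 * ha
  · linear_combination b 2 * ha

theorem stmt_13 (L : ℕ)
    (f : (Fin 3 → ℝ) → (Fin 3 → ℝ) → (Fin 3 → ℝ) → (Fin 3 → ℝ))
    (hf : ∀ x y z, f x y z =
      ![x 0 * y 1 + x 0 * y 2 + y 0 * z 0,
        x 1 * y 1 + x 2 * y 1 + y 0 * z 1,
        x 1 * y 2 + x 2 * y 2 + y 0 * z 2])
    (x : ℤ → Fin 3 → ℝ) (hper : ∀ i, x (i + L) = x i)
    (hΔ : ∀ i, (∑ m, x i m) = 1 ∧ ∀ m, 0 ≤ x i m) :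
    ∀ k, ∑ i ∈ Finset.range L, f (x ((i : ℤ) - 1)) (x (i : ℤ)) (x ((i : ℤ) + 1)) k
      = ∑ i ∈ Finset.range L, x (i : ℤ) k := by
  intro k
  have hconserved :=
    sum_range_rule_eq_of_flux_form (S := {a : Fin 3 → ℝ | ∑ m, a m = 1}) f id flux
    (fun a ha b hb c _ => (hf a b c).trans (rule_eq_add_flux_sub_flux a b c ha hb))
    hper (fun i => (hΔ i).1)
  simpa only [Finset.sum_apply, id] using congrFun hconserved k
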